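/- Let m, n, K be positive integers with K ≤ min{m,n}, and let A ∈ ℝ^{m×m}, B ∈ ℝ^{n×n}. Suppose the maximizers of the bilinear function (P,Q) ↦ trace(A P B Q^T) over Π_{m,n,K} × Π_{m,n,K} consist of the single diagonal pair (X₀, X₀), where X₀ is the m×n matrix with I_K in the top-left block and zeros elsewhere, and the maximum at (X₀,X₀) is strictly greater than the value at any other pair. Then X₀ is the unique maximizer of X ↦ trace(A X B X^T) over the polytope D_{m,n,K} (and hence also over Π_{m,n,K}). -/

import Mathlib

open Finset Matrix

/-- `PiSet m n K`: `m × n` binary matrices with at most one `1` per row,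
at most one `1` per column, and exactly `K` ones in total. -/
def PiSet (m n K : ℕ) : Set (Matrix (Fin m) (Fin n) ℝ) :=
  {X | (∀ i j, X i j = 0 ∨ X i j = 1) ∧ (∀ i, ∑ j, X i j ≤ 1) ∧
    (∀ j, ∑ i, X i j ≤ 1) ∧ ∑ i, ∑ j, X i j = (K : ℝ)}

/-- `DSet m n K`: the fractional relaxation (convex hull of `PiSet m n K`). -/
def DSet (m n K : ℕ) : Set (Matrix (Fin m) (Fin n) ℝ) :=
  {X | (∀ i j, 0 ≤ X i j) ∧ (∀ i, ∑ j, X i j ≤ 1) ∧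
    (∀ j, ∑ i, X i j ≤ 1) ∧ ∑ i, ∑ j, X i j = (K : ℝ)}

theorem bilinear_unique_max_implies_quadratic_unique_max
    (m n K : ℕ) (hm : 0 < m) (hn : 0 < n) (hK : 0 < K) (hKmn : K ≤ min m n)
    (A : Matrix (Fin m) (Fin m) ℝ) (B : Matrix (Fin n) (Fin n) ℝ)
    (X₀ : Matrix (Fin m) (Fin n) ℝ)
    (hX₀ : X₀ = Matrix.of fun (i : Fin m) (j : Fin n) => if (i : ℕ) = (j : ℕ) ∧ (i : ℕ) < K then (1:ℝ) else 0)
    (hX₀mem : X₀ ∈ PiSet m n K)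
    (hmax : ∀ P ∈ PiSet m n K, ∀ Q ∈ PiSet m n K, ¬(P = X₀ ∧ Q = X₀) →
      Matrix.trace (A * P * B * Qᵀ) < Matrix.trace (A * X₀ * B * X₀ᵀ)) :
    ∀ X ∈ DSet m n K, X ≠ X₀ →
      Matrix.trace (A * X * B * Xᵀ) < Matrix.trace (A * X₀ * B * X₀ᵀ) := by
  intro X hX hXne
  obtain ⟨hXnn, hXrow, hXcol, hXsum⟩ := hX
  have hKm : K ≤ m := hKmn.trans (min_le_left _ _)
  have hKn : K ≤ n := hKmn.trans (min_le_right _ _)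
  set r : Fin m → ℝ := fun i => 1 - ∑ j, X i j with hr
  set c : Fin n → ℝ := fun j => 1 - ∑ i, X i j with hc
  have hrnn : ∀ i, 0 ≤ r i := fun i => by simp only [hr, sub_nonneg]; exact hXrow i
  have hcnn : ∀ j, 0 ≤ c j := fun j => by simp only [hc, sub_nonneg]; exact hXcol j
  have hrsum : ∑ i, r i = (m : ℝ) - K := by
    simp only [hr, Finset.sum_sub_distrib, Finset.sum_const, card_univ, Fintype.card_fin,
      nsmul_eq_mul, mul_one, hXsum]
  have hcsum : ∑ j, c j = (n : ℝ) - K := by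
    have h2 : ∑ j, ∑ i, X i j = (K : ℝ) := by rw [Finset.sum_comm]; exact hXsum
    simp only [hc, Finset.sum_sub_distrib, Finset.sum_const, card_univ, Fintype.card_fin,
      nsmul_eq_mul, mul_one, h2]
  have hrzero : m = K → ∀ i, r i = 0 := by
    intro h i
    have h0 : ∑ i, r i = 0 := by rw [hrsum, h]; ring
    exact (Finset.sum_eq_zero_iff_of_nonneg (fun i _ => hrnn i)).1 h0 i (mem_univ i)
  have hczero : n = K → ∀ j, c j = 0 := by
    intro h j
    have h0 : ∑ j, c j = 0 := by rw [hcsum, h]; ring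
    exact (Finset.sum_eq_zero_iff_of_nonneg (fun j _ => hcnn j)).1 h0 j (mem_univ j)
  -- the padded square matrix
  set M' : Matrix (Fin m ⊕ Fin (n - K)) (Fin n ⊕ Fin (m - K)) ℝ :=
    Matrix.of (fun x z => match x, z with
      | Sum.inl i, Sum.inl j => X i j
      | Sum.inl i, Sum.inr _ => r i / ((m : ℝ) - K)
      | Sum.inr _, Sum.inl j => c j / ((n : ℝ) - K)
      | Sum.inr _, Sum.inr _ => 0) with hM'def
  have hM'nn : ∀ x z, 0 ≤ M' x z := by
    rintro (i | s) (j | t)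
    · exact hXnn i j
    · exact div_nonneg (hrnn i) (sub_nonneg.2 (by exact_mod_cast hKm))
    · exact div_nonneg (hcnn j) (sub_nonneg.2 (by exact_mod_cast hKn))
    · exact le_of_eq (by simp [hM'def])
  have hcastm : ((m - K : ℕ) : ℝ) = (m : ℝ) - K := by
    rw [Nat.cast_sub hKm]
  have hcastn : ((n - K : ℕ) : ℝ) = (n : ℝ) - K := by
    rw [Nat.cast_sub hKn]
  have hM'row : ∀ x, ∑ z, M' x z = 1 := by
    rintro (i | s)
    · rw [Fintype.sum_sum_type]
      have h1 : ∑ j, M' (Sum.inl i) (Sum.inl j) = 1 - r i := by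
        simp only [hM'def, Matrix.of_apply]; simp [hr]
      have h2 : ∑ t : Fin (m - K), M' (Sum.inl i) (Sum.inr t) = r i := by
        rcases eq_or_lt_of_le hKm with h | h
        · have : r i = 0 := hrzero h.symm i
          simp [hM'def, this]
        · have hne : (m : ℝ) - K ≠ 0 := by
            have : (K : ℝ) < m := by exact_mod_cast h
            linarith
          simp only [hM'def, Matrix.of_apply, Finset.sum_const, card_univ, Fintype.card_fin,
            nsmul_eq_mul]
          rw [hcastm]
          field_simp
      rw [h1, h2]; ring
    · have hlt : K < n := by
        have := s.2; omega
      have hne : (n : ℝ) - K ≠ 0 := by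
        have : (K : ℝ) < n := by exact_mod_cast hlt
        linarith
      rw [Fintype.sum_sum_type]
      have h1 : ∑ j, M' (Sum.inr s) (Sum.inl j) = 1 := by
        simp only [hM'def, Matrix.of_apply, ← Finset.sum_div, hcsum]
        field_simp
      have h2 : ∑ t : Fin (m - K), M' (Sum.inr s) (Sum.inr t) = 0 := by
        simp [hM'def]
      rw [h1, h2]; ring
  have hM'col : ∀ z, ∑ x, M' x z = 1 := by
    rintro (j | t)
    · rw [Fintype.sum_sum_type]
      have h1 : ∑ i, M' (Sum.inl i) (Sum.inl j) = 1 - c j := by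
        simp only [hM'def, Matrix.of_apply]; simp [hc]
      have h2 : ∑ s : Fin (n - K), M' (Sum.inr s) (Sum.inl j) = c j := by
        rcases eq_or_lt_of_le hKn with h | h
        · have : c j = 0 := hczero h.symm j
          simp [hM'def, this]
        · have hne : (n : ℝ) - K ≠ 0 := by
            have : (K : ℝ) < n := by exact_mod_cast h
            linarith
          simp only [hM'def, Matrix.of_apply, Finset.sum_const, card_univ, Fintype.card_fin,
            nsmul_eq_mul]
          rw [hcastn]
          field_simp
      rw [h1, h2]; ring
    · have hlt : K < m := by have := t.2; omega
      have hne : (m : ℝ) - K ≠ 0 := by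
        have : (K : ℝ) < m := by exact_mod_cast hlt
        linarith
      rw [Fintype.sum_sum_type]
      have h1 : ∑ i, M' (Sum.inl i) (Sum.inr t) = 1 := by
        simp only [hM'def, Matrix.of_apply, ← Finset.sum_div, hrsum]
        field_simp
      have h2 : ∑ s : Fin (n - K), M' (Sum.inr s) (Sum.inr t) = 0 := by
        simp [hM'def]
      rw [h1, h2]; ring
  -- identify columns with rows
  obtain e : (Fin m ⊕ Fin (n - K)) ≃ (Fin n ⊕ Fin (m - K)) :=
    Fintype.equivOfCardEq (by simp only [Fintype.card_sum, Fintype.card_fin]; omega)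
  set M : Matrix (Fin m ⊕ Fin (n - K)) (Fin m ⊕ Fin (n - K)) ℝ :=
    Matrix.of (fun x y => M' x (e y)) with hMdef
  have hMds : M ∈ doublyStochastic ℝ (Fin m ⊕ Fin (n - K)) := by
    rw [mem_doublyStochastic_iff_sum]
    refine ⟨fun x y => hM'nn x (e y), fun x => ?_, fun y => ?_⟩
    · rw [show ∑ y, M x y = ∑ y, M' x (e y) from rfl, Equiv.sum_comp e (M' x)]
      exact hM'row x
    · exact hM'col (e y)
  obtain ⟨w, hw0, hw1, hwM⟩ := exists_eq_sum_perm_of_mem_doublyStochastic hMds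
  -- entrywise decomposition
  have hMentry : ∀ x y, M x y = ∑ σ, w σ * σ.permMatrix ℝ x y := by
    intro x y
    conv_lhs => rw [← hwM]
    simp only [Matrix.sum_apply, Matrix.smul_apply, smul_eq_mul]
  have hsupp : ∀ σ, w σ ≠ 0 → ∀ x y, M x y = 0 → σ.permMatrix ℝ x y = 0 := by
    intro σ hσ x y hxy
    have h0 := hMentry x y
    rw [hxy] at h0
    have hterm : ∀ τ : Equiv.Perm (Fin m ⊕ Fin (n - K)), 0 ≤ w τ * τ.permMatrix ℝ x y := by
      intro τ
      exact mul_nonneg (hw0 τ) (nonneg_of_mem_doublyStochastic permMatrix_mem_doublyStochastic)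
    have := (Finset.sum_eq_zero_iff_of_nonneg (fun τ _ => hterm τ)).1 h0.symm σ (mem_univ σ)
    rcases mul_eq_zero.1 this with h | h
    · exact absurd h hσ
    · exact h
  have hperm01 : ∀ (σ : Equiv.Perm (Fin m ⊕ Fin (n - K))) x y,
      σ.permMatrix ℝ x y = 0 ∨ σ.permMatrix ℝ x y = 1 := by
    intro σ x y
    unfold Equiv.Perm.permMatrix PEquiv.toMatrix
    dsimp
    by_cases h : y ∈ some (σ x)
    · right; exact if_pos h
    · left; exact if_neg h
  -- extracted blocks
  set P : Equiv.Perm (Fin m ⊕ Fin (n - K)) → Matrix (Fin m) (Fin n) ℝ :=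
    fun σ => Matrix.of (fun i j => σ.permMatrix ℝ (Sum.inl i) (e.symm (Sum.inl j))) with hPdef
  have hXentry : ∀ i j, X i j = ∑ σ, w σ * P σ i j := by
    intro i j
    have h1 : M (Sum.inl i) (e.symm (Sum.inl j)) = X i j := by
      simp [hMdef, hM'def]
    rw [← h1, hMentry]
    rfl
  have hpermnn : ∀ (σ : Equiv.Perm (Fin m ⊕ Fin (n - K))) x y, 0 ≤ σ.permMatrix ℝ x y :=
    fun σ x y => nonneg_of_mem_doublyStochastic permMatrix_mem_doublyStochastic
  have hpermrow : ∀ (σ : Equiv.Perm (Fin m ⊕ Fin (n - K))) x, ∑ y, σ.permMatrix ℝ x y = 1 :=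
    fun σ x => sum_row_of_mem_doublyStochastic permMatrix_mem_doublyStochastic x
  have hpermcol : ∀ (σ : Equiv.Perm (Fin m ⊕ Fin (n - K))) y, ∑ x, σ.permMatrix ℝ x y = 1 :=
    fun σ y => sum_col_of_mem_doublyStochastic permMatrix_mem_doublyStochastic y
  have hPmem : ∀ σ, w σ ≠ 0 → P σ ∈ PiSet m n K := by
    intro σ hσ
    have hrowsplit : ∀ x : Fin m ⊕ Fin (n - K),
        (∑ j, σ.permMatrix ℝ x (e.symm (Sum.inl j))) +
        (∑ t, σ.permMatrix ℝ x (e.symm (Sum.inr t))) = 1 := by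
      intro x
      rw [← Fintype.sum_sum_type (fun z => σ.permMatrix ℝ x (e.symm z)),
        Equiv.sum_comp e.symm (σ.permMatrix ℝ x)]
      exact hpermrow σ x
    have hcolsplit : ∀ z : Fin n ⊕ Fin (m - K),
        (∑ i, σ.permMatrix ℝ (Sum.inl i) (e.symm z)) +
        (∑ s, σ.permMatrix ℝ (Sum.inr s) (e.symm z)) = 1 := by
      intro z
      rw [← Fintype.sum_sum_type (fun x => σ.permMatrix ℝ x (e.symm z))]
      exact hpermcol σ (e.symm z)
    refine ⟨fun i j => hperm01 σ _ _, ?_, ?_, ?_⟩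
    · intro i
      have h := hrowsplit (Sum.inl i)
      have h2 : 0 ≤ ∑ t, σ.permMatrix ℝ (Sum.inl i) (e.symm (Sum.inr t)) :=
        Finset.sum_nonneg fun t _ => hpermnn σ _ _
      simp only [hPdef, Matrix.of_apply]
      linarith
    · intro j
      have h := hcolsplit (Sum.inl j)
      have h2 : 0 ≤ ∑ s, σ.permMatrix ℝ (Sum.inr s) (e.symm (Sum.inl j)) :=
        Finset.sum_nonneg fun s _ => hpermnn σ _ _
      simp only [hPdef, Matrix.of_apply]
      linarith
    · -- total sum is K
      have hzero : ∀ (s : Fin (n - K)) (t : Fin (m - K)),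
          σ.permMatrix ℝ (Sum.inr s) (e.symm (Sum.inr t)) = 0 := by
        intro s t
        apply hsupp σ hσ
        simp [hMdef, hM'def]
      have hdummycol : ∀ t : Fin (m - K),
          ∑ i, σ.permMatrix ℝ (Sum.inl i) (e.symm (Sum.inr t)) = 1 := by
        intro t
        have h := hcolsplit (Sum.inr t)
        have h2 : ∑ s, σ.permMatrix ℝ (Sum.inr s) (e.symm (Sum.inr t)) = 0 :=
          Finset.sum_eq_zero fun s _ => hzero s t
        linarith
      have hB : (∑ i, ∑ j, σ.permMatrix ℝ (Sum.inl i) (e.symm (Sum.inl j))) +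
          (∑ i, ∑ t, σ.permMatrix ℝ (Sum.inl i) (e.symm (Sum.inr t))) = m := by
        rw [← Finset.sum_add_distrib]
        have : ∀ i : Fin m, (∑ j, σ.permMatrix ℝ (Sum.inl i) (e.symm (Sum.inl j))) +
            (∑ t, σ.permMatrix ℝ (Sum.inl i) (e.symm (Sum.inr t))) = 1 :=
          fun i => hrowsplit (Sum.inl i)
        rw [Finset.sum_congr rfl fun i _ => this i]
        simp
      have hD : ∑ i, ∑ t, σ.permMatrix ℝ (Sum.inl i) (e.symm (Sum.inr t)) = (m : ℝ) - K := by
        rw [Finset.sum_comm]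
        rw [Finset.sum_congr rfl fun t _ => hdummycol t]
        simp [hcastm]
      simp only [hPdef, Matrix.of_apply]
      linarith
  -- X is a convex combination of the P σ
  have hXdecomp : X = ∑ σ, w σ • P σ := by
    ext i j
    rw [hXentry i j]
    simp only [Matrix.sum_apply, Matrix.smul_apply, smul_eq_mul]
  -- if all blocks with positive weight were X₀, X would be X₀
  have hexists : ∃ σ, w σ ≠ 0 ∧ P σ ≠ X₀ := by
    by_contra h
    push_neg at h
    apply hXne
    rw [hXdecomp]
    have : ∀ σ : Equiv.Perm (Fin m ⊕ Fin (n - K)), w σ • P σ = w σ • X₀ := by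
      intro σ
      by_cases hσ : w σ = 0
      · simp [hσ]
      · rw [h σ hσ]
    rw [Finset.sum_congr rfl fun σ _ => this σ, ← Finset.sum_smul, hw1, one_smul]
  obtain ⟨σ₀, hσ₀ne, hPσ₀⟩ := hexists
  have hσ₀pos : 0 < w σ₀ := lt_of_le_of_ne (hw0 σ₀) (Ne.symm hσ₀ne)
  set c0 := Matrix.trace (A * X₀ * B * X₀ᵀ) with hc0
  -- bilinear expansion of the trace
  have key : Matrix.trace (A * X * B * Xᵀ) =
      ∑ σ, ∑ τ, (w σ * w τ) * Matrix.trace (A * P σ * B * (P τ)ᵀ) := by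
    rw [hXdecomp]
    rw [Matrix.transpose_sum]
    simp only [Matrix.transpose_smul, Matrix.mul_sum, Matrix.sum_mul, Matrix.mul_smul,
      Matrix.smul_mul, smul_smul, Matrix.trace_sum, Matrix.trace_smul, smul_eq_mul]
    rw [Finset.sum_comm]
    apply Finset.sum_congr rfl
    intro σ _
    rw [Finset.mul_sum]
    apply Finset.sum_congr rfl
    intro τ _
    ring
  have hle : ∀ σ τ, (w σ * w τ) * Matrix.trace (A * P σ * B * (P τ)ᵀ) ≤ (w σ * w τ) * c0 := by
    intro σ τ
    rcases eq_or_lt_of_le (mul_nonneg (hw0 σ) (hw0 τ)) with h | h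
    · rw [← h, zero_mul, zero_mul]
    · have hσ : w σ ≠ 0 := fun h0 => by simp [h0] at h
      have hτ : w τ ≠ 0 := fun h0 => by simp [h0] at h
      have htr : Matrix.trace (A * P σ * B * (P τ)ᵀ) ≤ c0 := by
        by_cases hb : P σ = X₀ ∧ P τ = X₀
        · rw [hb.1, hb.2]
        · exact (hmax _ (hPmem σ hσ) _ (hPmem τ hτ) hb).le
      exact mul_le_mul_of_nonneg_left htr h.le
  have hstrict : (w σ₀ * w σ₀) * Matrix.trace (A * P σ₀ * B * (P σ₀)ᵀ) < (w σ₀ * w σ₀) * c0 := by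
    have htr : Matrix.trace (A * P σ₀ * B * (P σ₀)ᵀ) < c0 :=
      hmax _ (hPmem σ₀ hσ₀ne) _ (hPmem σ₀ hσ₀ne) (fun hb => hPσ₀ hb.1)
    exact mul_lt_mul_of_pos_left htr (mul_pos hσ₀pos hσ₀pos)
  have hfinal : ∑ σ, ∑ τ, (w σ * w τ) * Matrix.trace (A * P σ * B * (P τ)ᵀ) <
      ∑ σ, ∑ τ, (w σ * w τ) * c0 := by
    apply Finset.sum_lt_sum
    · intro σ _
      exact Finset.sum_le_sum fun τ _ => hle σ τ
    · refine ⟨σ₀, mem_univ σ₀, ?_⟩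
      exact Finset.sum_lt_sum (fun τ _ => hle σ₀ τ) ⟨σ₀, mem_univ σ₀, hstrict⟩
  have hsum : ∑ σ, ∑ τ : Equiv.Perm (Fin m ⊕ Fin (n - K)), (w σ * w τ) * c0 = c0 := by
    simp only [mul_assoc, ← Finset.mul_sum, ← Finset.sum_mul, hw1]
    simp [hw1]
  rw [key]
  calc ∑ σ, ∑ τ, (w σ * w τ) * Matrix.trace (A * P σ * B * (P τ)ᵀ)
      < ∑ σ, ∑ τ, (w σ * w τ) * c0 := hfinal
    _ = c0 := hsum
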